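/- arXiv:1002.1058 — 2 statements merged into one kernel-verified Lean document; each statement's English description precedes it below -/
import Mathlib

section
/- Let n ≥ 1, let Pₙ be the path graph on vertices Δ = {α₁,…,αₙ}, and let J₀ ⊆ Δ. The lattice Λ*(Pₙ,J₀) is graded with rank function U ↦ |U| (that is, whenever V covers U in Λ*(Pₙ,J₀) one has |V| = |U| + 1), and Λ*(Pₙ,J₀) is upper semimodular: for all U, V ∈ Λ*(Pₙ,J₀), |U| + |V| ≥ |U ∧ V| + |U ∨ V|. -/
open SimpleGraph Finset

/-- `ReachIn G U a b` : `b` is reachable from `a` within the subgraph of `G`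
induced on the vertex set `U`. -/
def ReachIn {n : ℕ} (G : SimpleGraph (Fin n)) (U : Finset (Fin n)) (a b : Fin n) : Prop :=
  Relation.ReflTransGen (fun x y => G.Adj x y ∧ x ∈ U ∧ y ∈ U) a b

/-- `U` is admissible (with respect to `J₀`) if no connected component of the
subgraph of `G` induced on `U` is entirely contained in `J₀`: every component
contains a vertex outside `J₀`. -/
def Admissible {n : ℕ} (G : SimpleGraph (Fin n)) (J₀ U : Finset (Fin n)) : Prop :=
  ∀ a ∈ U, ∃ b, ReachIn G U a b ∧ b ∉ J₀

/-- A subset `A` is connected if the induced subgraph on `A` is connected. -/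
def ConnIn {n : ℕ} (G : SimpleGraph (Fin n)) (A : Finset (Fin n)) : Prop :=
  ∀ a ∈ A, ∀ b ∈ A, ReachIn G A a b

theorem ReachIn.mono {n : ℕ} {G : SimpleGraph (Fin n)} {U V : Finset (Fin n)} (h : U ⊆ V)
    {a b : Fin n} (hr : ReachIn G U a b) : ReachIn G V a b :=
  by
  unfold ReachIn at *
  induction hr with
  | refl => exact Relation.ReflTransGen.refl
  | tail _ hxy ih => exact Relation.ReflTransGen.tail ih ⟨hxy.1, h hxy.2.1, h hxy.2.2⟩

theorem admissible_empty {n : ℕ} (G : SimpleGraph (Fin n)) (J₀ : Finset (Fin n)) :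
    Admissible G J₀ ∅ := fun a ha => absurd ha (Finset.notMem_empty a)

theorem admissible_union {n : ℕ} {G : SimpleGraph (Fin n)} {J₀ U V : Finset (Fin n)}
    (hU : Admissible G J₀ U) (hV : Admissible G J₀ V) : Admissible G J₀ (U ∪ V) := by
  intro a ha
  rcases Finset.mem_union.mp ha with h | h
  · obtain ⟨b, hb, hbJ⟩ := hU a h
    exact ⟨b, hb.mono Finset.subset_union_left, hbJ⟩
  · obtain ⟨b, hb, hbJ⟩ := hV a h
    exact ⟨b, hb.mono Finset.subset_union_right, hbJ⟩

/-- `Λ*(G, J₀)` : the poset of admissible subsets, ordered by inclusion. -/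
def CrossSection {n : ℕ} (G : SimpleGraph (Fin n)) (J₀ : Finset (Fin n)) : Type :=
  {U : Finset (Fin n) // Admissible G J₀ U}

namespace CrossSection

variable {n : ℕ} {G : SimpleGraph (Fin n)} {J₀ : Finset (Fin n)}

instance : PartialOrder (CrossSection G J₀) :=
  inferInstanceAs (PartialOrder {U : Finset (Fin n) // Admissible G J₀ U})

instance : DecidableEq (CrossSection G J₀) :=
  inferInstanceAs (DecidableEq {U : Finset (Fin n) // Admissible G J₀ U})

noncomputable instance : Fintype (CrossSection G J₀) :=
  Fintype.ofInjective (Subtype.val : CrossSection G J₀ → Finset (Fin n)) Subtype.val_injective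

open Classical in
/-- The underlying set of the meet of two admissible sets: the largest admissible
subset contained in the intersection. -/
noncomputable def meetFinset (G : SimpleGraph (Fin n)) (J₀ : Finset (Fin n))
    (U V : Finset (Fin n)) : Finset (Fin n) :=
  ((U ∩ V).powerset.filter (fun W => Admissible G J₀ W)).sup id

theorem admissible_sup {s : Finset (Finset (Fin n))}
    (h : ∀ W ∈ s, Admissible G J₀ W) : Admissible G J₀ (s.sup id) :=
  Finset.sup_induction (by simpa using admissible_empty G J₀)
    (fun a ha b hb => by simpa using admissible_union ha hb) h

theorem admissible_meetFinset (G : SimpleGraph (Fin n)) (J₀ U V : Finset (Fin n)) :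
    Admissible G J₀ (meetFinset G J₀ U V) := by
  classical
  exact admissible_sup (fun W hW => (Finset.mem_filter.mp hW).2)

theorem meetFinset_subset_left (G : SimpleGraph (Fin n)) (J₀ U V : Finset (Fin n)) :
    meetFinset G J₀ U V ≤ U := by
  classical
  unfold meetFinset
  refine Finset.sup_le (fun W hW => ?_)
  have := Finset.mem_powerset.mp (Finset.mem_filter.mp hW).1
  exact fun x hx => (Finset.mem_inter.mp (this hx)).1

theorem meetFinset_subset_right (G : SimpleGraph (Fin n)) (J₀ U V : Finset (Fin n)) :
    meetFinset G J₀ U V ≤ V := by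
  classical
  unfold meetFinset
  refine Finset.sup_le (fun W hW => ?_)
  have := Finset.mem_powerset.mp (Finset.mem_filter.mp hW).1
  exact fun x hx => (Finset.mem_inter.mp (this hx)).2

theorem subset_meetFinset {G : SimpleGraph (Fin n)} {J₀ U V W : Finset (Fin n)}
    (hW : Admissible G J₀ W) (h1 : W ⊆ U) (h2 : W ⊆ V) : W ≤ meetFinset G J₀ U V := by
  classical
  unfold meetFinset
  exact Finset.le_sup (f := id)
    (Finset.mem_filter.mpr ⟨Finset.mem_powerset.mpr (Finset.subset_inter h1 h2), hW⟩)

noncomputable instance : Lattice (CrossSection G J₀) :=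
  { (inferInstance : PartialOrder (CrossSection G J₀)) with
    sup := fun U V => ⟨U.1 ∪ V.1, admissible_union U.2 V.2⟩
    le_sup_left := fun U V => show U.1 ⊆ U.1 ∪ V.1 from Finset.subset_union_left
    le_sup_right := fun U V => show V.1 ⊆ U.1 ∪ V.1 from Finset.subset_union_right
    sup_le := fun U V W h1 h2 => show U.1 ∪ V.1 ⊆ W.1 from Finset.union_subset h1 h2
    inf := fun U V => ⟨meetFinset G J₀ U.1 V.1, admissible_meetFinset G J₀ U.1 V.1⟩
    inf_le_left := fun U V => meetFinset_subset_left G J₀ U.1 V.1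
    inf_le_right := fun U V => meetFinset_subset_right G J₀ U.1 V.1
    le_inf := fun W U V h1 h2 => subset_meetFinset W.2 h1 h2 }

instance : OrderBot (CrossSection G J₀) where
  bot := ⟨∅, admissible_empty G J₀⟩
  bot_le := fun U => show (∅ : Finset (Fin n)) ⊆ U.1 from Finset.empty_subset _

@[simp] theorem sup_val (U V : CrossSection G J₀) : (U ⊔ V).1 = U.1 ∪ V.1 := rfl

@[simp] theorem inf_val (U V : CrossSection G J₀) : (U ⊓ V).1 = meetFinset G J₀ U.1 V.1 := rfl

end CrossSection

/-!
The lattice has the augmentation property: if `U ⊊ V` are admissible, some `x ∈ V \ U`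
keeps `insert x U` admissible. Either `V \ U` meets the complement of `J₀`, and such an `x`
is its own witness, or every vertex of `V \ U` reaches `U` inside `V`, and the vertex just
before such a path first enters `U` is adjacent to `U`. Hence a cover adds exactly one
vertex. Since the join is the union and the meet lies inside the intersection,
`|U ∧ V| + |U ∨ V| ≤ |U ∩ V| + |U ∪ V| = |U| + |V|`.
-/

section

variable {n : ℕ} {G : SimpleGraph (Fin n)} {J₀ U V : Finset (Fin n)}

theorem ReachIn.mem_of_mem {a b : Fin n} (hr : ReachIn G V a b) (ha : a ∈ V) : b ∈ V := by
  induction hr with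
  | refl => exact ha
  | tail _ h _ => exact h.2.2

theorem ReachIn.exists_adj_of_notMem_of_mem {a b : Fin n} (hr : ReachIn G V a b)
    (ha : a ∈ V) (haU : a ∉ U) (hb : b ∈ U) : ∃ x ∈ V, x ∉ U ∧ ∃ u ∈ U, G.Adj x u := by
  induction hr using Relation.ReflTransGen.head_induction_on with
  | refl => exact absurd hb haU
  | @head a c hac _ ih =>
    by_cases hc : c ∈ U
    · exact ⟨a, ha, haU, c, hc, hac.1⟩
    · exact ih hac.2.2 hc

theorem Admissible.insert_of_notMem (hU : Admissible G J₀ U) {x : Fin n} (hx : x ∉ J₀) :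
    Admissible G J₀ (insert x U) := by
  intro a ha
  rcases mem_insert.mp ha with rfl | h
  · exact ⟨a, .refl, hx⟩
  · obtain ⟨b, hr, hb⟩ := hU a h
    exact ⟨b, hr.mono (subset_insert _ _), hb⟩

theorem Admissible.insert_of_adj (hU : Admissible G J₀ U) {x u : Fin n} (hu : u ∈ U)
    (hxu : G.Adj x u) : Admissible G J₀ (insert x U) := by
  intro a ha
  rcases mem_insert.mp ha with rfl | h
  · obtain ⟨b, hr, hb⟩ := hU u hu
    exact ⟨b, .head ⟨hxu, mem_insert_self _ _, mem_insert_of_mem hu⟩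
      (hr.mono (subset_insert _ _)), hb⟩
  · obtain ⟨b, hr, hb⟩ := hU a h
    exact ⟨b, hr.mono (subset_insert _ _), hb⟩

theorem Admissible.exists_insert_of_ssubset (hU : Admissible G J₀ U) (hV : Admissible G J₀ V)
    (hUV : U ⊂ V) : ∃ x ∈ V, x ∉ U ∧ Admissible G J₀ (insert x U) := by
  by_cases hJ : ∃ x ∈ V, x ∉ U ∧ x ∉ J₀
  · obtain ⟨x, hxV, hxU, hxJ⟩ := hJ
    exact ⟨x, hxV, hxU, hU.insert_of_notMem hxJ⟩
  push Not at hJ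
  obtain ⟨a, haV, haU⟩ := exists_of_ssubset hUV
  obtain ⟨b, hr, hbJ⟩ := hV a haV
  have hbU : b ∈ U := by_contra fun hbU => hbJ (hJ b (hr.mem_of_mem haV) hbU)
  obtain ⟨x, hxV, hxU, u, hu, hxu⟩ := hr.exists_adj_of_notMem_of_mem haV haU hbU
  exact ⟨x, hxV, hxU, hU.insert_of_adj hu hxu⟩

namespace CrossSection

theorem card_eq_succ_of_covBy {U V : CrossSection G J₀} (hUV : U ⋖ V) :
    V.1.card = U.1.card + 1 := by
  obtain ⟨x, hxV, hxU, hW⟩ := U.2.exists_insert_of_ssubset V.2 hUV.lt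
  let W : CrossSection G J₀ := ⟨insert x U.1, hW⟩
  have hUW : U ≤ W := subset_insert x U.1
  have hWV : W ≤ V := insert_subset hxV hUV.le
  obtain hWU | hWV := hUV.eq_or_eq hUW hWV
  · exact absurd (hWU ▸ mem_insert_self x U.1) hxU
  · rw [← hWV]
    exact card_insert_of_notMem hxU

theorem card_inf_add_card_sup_le (U V : CrossSection G J₀) :
    (U ⊓ V).1.card + (U ⊔ V).1.card ≤ U.1.card + V.1.card :=
  calc (U ⊓ V).1.card + (U ⊔ V).1.card
      ≤ (U.1 ∩ V.1).card + (U.1 ∪ V.1).card :=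
        Nat.add_le_add_right
          (card_le_card (subset_inter (inf_le_left (b := V)) (inf_le_right (a := U)))) _
    _ = U.1.card + V.1.card := card_inter_add_card_union _ _

end CrossSection

end

theorem stmt_3_general (n : ℕ) (J₀ : Finset (Fin n)) :
    (∀ U V : CrossSection (pathGraph n) J₀, U ⋖ V → V.1.card = U.1.card + 1) ∧
    (∀ U V : CrossSection (pathGraph n) J₀,
      (U ⊓ V).1.card + (U ⊔ V).1.card ≤ U.1.card + V.1.card) :=
  ⟨fun _ _ => CrossSection.card_eq_succ_of_covBy, CrossSection.card_inf_add_card_sup_le⟩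

theorem stmt_3 (n : ℕ) (hn : 1 ≤ n) (J₀ : Finset (Fin n)) :
    (∀ U V : CrossSection (pathGraph n) J₀, U ⋖ V → V.1.card = U.1.card + 1) ∧
    (∀ U V : CrossSection (pathGraph n) J₀,
      (U ⊓ V).1.card + (U ⊔ V).1.card ≤ U.1.card + V.1.card) :=
  stmt_3_general n J₀
end

section
/- Let n ≥ 1, let Pₙ be the path graph on vertices Δ = {α₁,…,αₙ}, and let J₀ ⊆ Δ. If X ∈ Λ*(Pₙ,J₀) is an admissible subset with X ∩ J₀ = ∅, then X is both a right modular and a left modular element of the lattice Λ*(Pₙ,J₀): for all U, V ∈ Λ*(Pₙ,J₀), V ≤ X implies V ∨ (U ∧ X) = (V ∨ U) ∧ X, and U ≤ V implies U ∨ (X ∧ V) = (U ∨ X) ∧ V. -/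
open SimpleGraph Finset

/-! The meet in `Λ*` is the intersection as soon as the intersection is admissible, and every
subset of a set disjoint from `J₀` is admissible. So for such an `X` all meets in both modular laws
are plain intersections (for `(U ⊔ X) ⊓ V` because it equals `U ∪ (X ∩ V)`), and the laws are
inherited from the distributive lattice of finsets. -/

theorem admissible_of_disjoint {n : ℕ} (G : SimpleGraph (Fin n)) {J₀ W : Finset (Fin n)}
    (hW : Disjoint W J₀) : Admissible G J₀ W :=
  fun a ha => ⟨a, Relation.ReflTransGen.refl, Finset.disjoint_left.mp hW ha⟩

namespace CrossSection

variable {n : ℕ} {G : SimpleGraph (Fin n)} {J₀ : Finset (Fin n)}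

theorem val_inf_of_admissible {U V : CrossSection G J₀} (h : Admissible G J₀ (U.1 ∩ V.1)) :
    (U ⊓ V).1 = U.1 ∩ V.1 :=
  (Finset.subset_inter (meetFinset_subset_left _ _ _ _) (meetFinset_subset_right _ _ _ _)).antisymm
    (subset_meetFinset h Finset.inter_subset_left Finset.inter_subset_right)

theorem sup_inf_assoc_of_le_of_disjoint_right {x z : CrossSection G J₀} (hz : Disjoint z.1 J₀)
    (y : CrossSection G J₀) (hxz : x ≤ z) : (x ⊔ y) ⊓ z = x ⊔ y ⊓ z := by
  have hinf (w : CrossSection G J₀) : (w ⊓ z).1 = w.1 ∩ z.1 :=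
    val_inf_of_admissible (admissible_of_disjoint G (hz.mono_left Finset.inter_subset_right))
  apply Subtype.ext
  rw [hinf, sup_val, sup_val, hinf]
  exact sup_inf_assoc_of_le y.1 (show x.1 ⊆ z.1 from hxz)

theorem sup_inf_assoc_of_le_of_disjoint_middle {y : CrossSection G J₀} (hy : Disjoint y.1 J₀)
    {x z : CrossSection G J₀} (hxz : x ≤ z) : (x ⊔ y) ⊓ z = x ⊔ y ⊓ z := by
  have hyz : Admissible G J₀ (y.1 ∩ z.1) :=
    admissible_of_disjoint G (hy.mono_left Finset.inter_subset_left)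
  have hdistrib : (x.1 ∪ y.1) ∩ z.1 = x.1 ∪ y.1 ∩ z.1 :=
    sup_inf_assoc_of_le y.1 (show x.1 ⊆ z.1 from hxz)
  apply Subtype.ext
  rw [val_inf_of_admissible (hdistrib ▸ admissible_union x.2 hyz), sup_val, sup_val,
    val_inf_of_admissible hyz, hdistrib]

end CrossSection

theorem stmt_14_general (n : ℕ) (J₀ : Finset (Fin n))
    (X : CrossSection (pathGraph n) J₀) (hX : X.1 ∩ J₀ = ∅) :
    (∀ U V : CrossSection (pathGraph n) J₀, V ≤ X → V ⊔ (U ⊓ X) = (V ⊔ U) ⊓ X) ∧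
    (∀ U V : CrossSection (pathGraph n) J₀, U ≤ V → U ⊔ (X ⊓ V) = (U ⊔ X) ⊓ V) := by
  have hX' : Disjoint X.1 J₀ := Finset.disjoint_iff_inter_eq_empty.mpr hX
  exact ⟨fun U _ hVX => (CrossSection.sup_inf_assoc_of_le_of_disjoint_right hX' U hVX).symm,
    fun _ _ hUV => (CrossSection.sup_inf_assoc_of_le_of_disjoint_middle hX' hUV).symm⟩

theorem stmt_14 (n : ℕ) (hn : 1 ≤ n) (J₀ : Finset (Fin n))
    (X : CrossSection (pathGraph n) J₀) (hX : X.1 ∩ J₀ = ∅) :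
    (∀ U V : CrossSection (pathGraph n) J₀, V ≤ X → V ⊔ (U ⊓ X) = (V ⊔ U) ⊓ X) ∧
    (∀ U V : CrossSection (pathGraph n) J₀, U ≤ V → U ⊔ (X ⊓ V) = (U ⊔ X) ⊓ V) :=
  stmt_14_general n J₀ X hX
end
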